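/- arXiv:2510.18222 — 5 statements merged into one kernel-verified Lean document; each statement's English description precedes it below -/
import Mathlib

section
/- Let d ≥ 1 be an integer and p ≥ 2 a real number. Then for all a, b ∈ ℝ^d one has |a|^p − |b|^p − p·|b|^{p−2}·⟨b, a−b⟩ ≤ p(p−1)·|a−b|²·∫₀¹ (1−θ)·|b + θ(a−b)|^{p−2} dθ. -/
/-!
Along the segment `θ ↦ b + θ • (a - b)` the function `‖·‖ ^ p` is `φ θ ^ (p / 2)` for the
quadratic `φ θ = ‖b + θ • (a - b)‖ ^ 2`, so the inequality is Taylor's formula with integral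
remainder for `φ ^ (p / 2)` on `[0, 1]`, combined with the bound
`(φ ^ (p / 2))'' ≤ p (p - 1) ‖a - b‖ ^ 2 φ ^ (p / 2 - 1)`, which comes from the Cauchy–Schwarz
inequality `(φ' / 2) ^ 2 ≤ ‖a - b‖ ^ 2 φ`. Where `φ` vanishes, `φ ^ (p / 2)` need not be twice
differentiable, so the inequality is first proved for `φ + ε` and then `ε → 0` by continuity.
-/

open MeasureTheory RealInnerProductSpace
open Set

theorem sub_sub_mul_deriv_eq_integral_mul {f f' f'' : ℝ → ℝ} {a b : ℝ}
    (hf : ∀ t ∈ uIcc a b, HasDerivAt f (f' t) t) (hf' : ∀ t ∈ uIcc a b, HasDerivAt f' (f'' t) t)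
    (hf'' : IntervalIntegrable f'' volume a b) :
    f b - f a - (b - a) * f' a = ∫ t in a..b, (b - t) * f'' t := by
  have hu : ∀ t ∈ uIcc a b, HasDerivAt (fun t => b - t) (-1) t := fun t _ =>
    (hasDerivAt_id t).const_sub b
  have hint : IntervalIntegrable f' volume a b :=
    (HasDerivAt.continuousOn hf').intervalIntegrable
  rw [intervalIntegral.integral_mul_deriv_eq_deriv_mul hu hf' intervalIntegrable_const hf'']
  simp only [neg_one_mul, intervalIntegral.integral_neg,
    intervalIntegral.integral_eq_sub_of_hasDerivAt hf hint]
  ring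

theorem mul_rpow_add_mul_sq_mul_rpow_le {p x y C : ℝ} (hp : 2 ≤ p) (hx : 0 < x)
    (hy : y ^ 2 ≤ C * x) :
    p * C * x ^ (p / 2 - 1) + p * (p - 2) * y ^ 2 * x ^ (p / 2 - 2) ≤
      p * (p - 1) * C * x ^ (p / 2 - 1) := by
  have hsplit : x ^ (p / 2 - 1) = x ^ (p / 2 - 2) * x := by
    rw [← Real.rpow_add_one hx.ne']
    congr 1
    ring
  have hpow_nonneg : 0 ≤ x ^ (p / 2 - 2) := Real.rpow_nonneg hx.le _
  have hp_nonneg : 0 ≤ p * (p - 2) := mul_nonneg (by linarith) (by linarith)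
  rw [hsplit]
  linarith [mul_le_mul_of_nonneg_left (mul_le_mul_of_nonneg_right hy hpow_nonneg) hp_nonneg]

theorem rpow_quadratic_taylor_le_of_pos {p A B C : ℝ} (hp : 2 ≤ p)
    (hφ : ∀ θ, 0 < A + 2 * B * θ + C * θ ^ 2) :
    (A + 2 * B + C) ^ (p / 2) - A ^ (p / 2) - p * B * A ^ (p / 2 - 1) ≤
      p * (p - 1) * C * ∫ θ in (0:ℝ)..1, (1 - θ) * (A + 2 * B * θ + C * θ ^ 2) ^ (p / 2 - 1) := by
  set φ : ℝ → ℝ := fun θ => A + 2 * B * θ + C * θ ^ 2 with hφ_def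
  have hφ' (θ : ℝ) : HasDerivAt φ (2 * (B + C * θ)) θ :=
    ((((hasDerivAt_id θ).const_mul (2 * B)).const_add A).add
      ((hasDerivAt_pow 2 θ).const_mul C)).congr_deriv (by simp; ring)
  have hf (θ : ℝ) : HasDerivAt (fun θ => φ θ ^ (p / 2)) (p * (B + C * θ) * φ θ ^ (p / 2 - 1)) θ :=
    ((hφ' θ).rpow_const (Or.inl (hφ θ).ne')).congr_deriv (by ring)
  set f'' : ℝ → ℝ := fun θ =>
    p * C * φ θ ^ (p / 2 - 1) + p * (p - 2) * (B + C * θ) ^ 2 * φ θ ^ (p / 2 - 2)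
  have hf' (θ : ℝ) : HasDerivAt (fun θ => p * (B + C * θ) * φ θ ^ (p / 2 - 1)) (f'' θ) θ := by
    have := ((((hasDerivAt_id θ).const_mul C).const_add B).const_mul p).mul
      ((hφ' θ).rpow_const (p := p / 2 - 1) (Or.inl (hφ θ).ne'))
    rw [show p / 2 - 1 - 1 = p / 2 - 2 by ring] at this
    exact this.congr_deriv (by simp [f'']; ring)
  have hpow (r : ℝ) : Continuous fun θ => φ θ ^ r :=
    (by fun_prop : Continuous φ).rpow_const fun θ => Or.inl (hφ θ).ne'
  have hf''_cont : Continuous f'' :=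
    (continuous_const.mul (hpow _)).add ((continuous_const.mul (by fun_prop)).mul (hpow _))
  -- `(B + Cθ)² - C φ θ = B² - AC`, and `B² ≤ AC` because `φ > 0` has nonpositive discriminant.
  have hderiv_sq (θ : ℝ) : (B + C * θ) ^ 2 ≤ C * φ θ := by
    have := discrim_le_zero (a := C) (b := 2 * B) (c := A) fun θ => by linarith [hφ θ]
    simp only [discrim, hφ_def] at this ⊢
    nlinarith
  have htaylor := sub_sub_mul_deriv_eq_integral_mul (a := 0) (b := 1) (fun θ _ => hf θ)
    (fun θ _ => hf' θ) (hf''_cont.intervalIntegrable 0 1)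
  calc _ = ∫ θ in (0:ℝ)..1, (1 - θ) * f'' θ := by rw [← htaylor]; simp [φ]
    _ ≤ ∫ θ in (0:ℝ)..1, (1 - θ) * (p * (p - 1) * C * φ θ ^ (p / 2 - 1)) := by
      refine intervalIntegral.integral_mono_on zero_le_one ?_ ?_ fun θ hθ =>
        mul_le_mul_of_nonneg_left (mul_rpow_add_mul_sq_mul_rpow_le hp (hφ θ) (hderiv_sq θ))
          (by linarith [hθ.2])
      · exact (by fun_prop : Continuous fun θ : ℝ => 1 - θ).mul hf''_cont |>.intervalIntegrable _ _
      · exact ((continuous_const.sub continuous_id).mul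
          (continuous_const.mul (hpow _))).intervalIntegrable _ _
    _ = _ := by
      rw [← intervalIntegral.integral_const_mul]
      congr 1 with θ
      ring

theorem rpow_quadratic_taylor_le {p A B C : ℝ} (hp : 2 ≤ p)
    (hφ : ∀ θ, 0 ≤ A + 2 * B * θ + C * θ ^ 2) :
    (A + 2 * B + C) ^ (p / 2) - A ^ (p / 2) - p * B * A ^ (p / 2 - 1) ≤
      p * (p - 1) * C * ∫ θ in (0:ℝ)..1, (1 - θ) * (A + 2 * B * θ + C * θ ^ 2) ^ (p / 2 - 1) := by
  have hpow : Continuous fun x : ℝ => x ^ (p / 2) := Real.continuous_rpow_const (by linarith)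
  have hpow' : Continuous fun x : ℝ => x ^ (p / 2 - 1) :=
    Real.continuous_rpow_const (by linarith)
  -- Raising `A` to any `A' > A` adds `A' - A > 0` to the quadratic, making it positive.
  refine ContinuousWithinAt.closure_le (s := Ioi A) (x := A)
    (f := fun A' => (A' + 2 * B + C) ^ (p / 2) - A' ^ (p / 2) - p * B * A' ^ (p / 2 - 1))
    (g := fun A' => p * (p - 1) * C *
      ∫ θ in (0:ℝ)..1, (1 - θ) * (A' + 2 * B * θ + C * θ ^ 2) ^ (p / 2 - 1))
    (by rw [closure_Ioi]; exact self_mem_Ici) ?_ ?_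
    fun A' hA' => rpow_quadratic_taylor_le_of_pos hp fun θ => by linarith [hφ θ, mem_Ioi.mp hA']
  · exact Continuous.continuousWithinAt (by fun_prop)
  · refine (continuous_const.mul ?_).continuousWithinAt
    exact intervalIntegral.continuous_parametric_intervalIntegral_of_continuous'
      (by fun_prop) 0 1

section InnerProductSpace

variable {E : Type*} [NormedAddCommGroup E] [InnerProductSpace ℝ E]

theorem norm_add_smul_sq (x v : E) (θ : ℝ) :
    ‖x + θ • v‖ ^ 2 = ‖x‖ ^ 2 + 2 * ⟪x, v⟫ * θ + ‖v‖ ^ 2 * θ ^ 2 := by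
  rw [norm_add_sq_real, real_inner_smul_right, norm_smul, mul_pow, Real.norm_eq_abs, sq_abs]
  ring

theorem norm_rpow_sub_sub_le {p : ℝ} (hp : 2 ≤ p) (a b : E) :
    ‖a‖ ^ p - ‖b‖ ^ p - p * ‖b‖ ^ (p - 2) * ⟪b, a - b⟫ ≤
      p * (p - 1) * ‖a - b‖ ^ 2 * ∫ θ in (0:ℝ)..1, (1 - θ) * ‖b + θ • (a - b)‖ ^ (p - 2) := by
  have key := rpow_quadratic_taylor_le hp (A := ‖b‖ ^ 2) (B := ⟪b, a - b⟫) (C := ‖a - b‖ ^ 2)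
    fun θ => norm_add_smul_sq b (a - b) θ ▸ by positivity
  have ha : ‖b‖ ^ 2 + 2 * ⟪b, a - b⟫ + ‖a - b‖ ^ 2 = ‖a‖ ^ 2 := by
    simpa using (norm_add_smul_sq b (a - b) 1).symm
  have hrpow (x : E) (r : ℝ) : ‖x‖ ^ r = (‖x‖ ^ 2) ^ (r / 2) := by
    rw [← Real.rpow_natCast_mul (norm_nonneg x)]
    norm_num [mul_div_cancel₀]
  simp only [← norm_add_smul_sq, ha, ← hrpow, show p / 2 - 1 = (p - 2) / 2 by ring] at key
  linarith

end InnerProductSpace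

theorem stmt_0_general (d : ℕ) (p : ℝ) (hp : 2 ≤ p)
    (a b : EuclideanSpace ℝ (Fin d)) :
    ‖a‖ ^ p - ‖b‖ ^ p - p * ‖b‖ ^ (p - 2) * ⟪b, a - b⟫ ≤
      p * (p - 1) * ‖a - b‖ ^ 2 *
        ∫ θ in (0:ℝ)..1, (1 - θ) * ‖b + θ • (a - b)‖ ^ (p - 2) :=
  norm_rpow_sub_sub_le hp a b

/-- Taylor-type remainder inequality for `x ↦ |x|^p` (Lemma `mvt` of the paper). -/
theorem stmt_0 (d : ℕ) (hd : 1 ≤ d) (p : ℝ) (hp : 2 ≤ p)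
    (a b : EuclideanSpace ℝ (Fin d)) :
    ‖a‖ ^ p - ‖b‖ ^ p - p * ‖b‖ ^ (p - 2) * ⟪b, a - b⟫ ≤
      p * (p - 1) * ‖a - b‖ ^ 2 *
        ∫ θ in (0:ℝ)..1, (1 - θ) * ‖b + θ • (a - b)‖ ^ (p - 2) :=
  stmt_0_general d p hp a b
end

section
/- Let d ≥ 1 be an integer and q₀ > 3 a real number. Then for all a, b ∈ ℝ^d: |a+b|^{q₀} − |a|^{q₀} − q₀·|a|^{q₀−2}·⟨a,b⟩ ≤ q₀(q₀−1)·2^{q₀−4}·(|a|^{q₀−2}·|b|² + |b|^{q₀}). -/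
/-!
For fixed `r = ‖a‖` and `s = ‖b‖`, the left-hand side is a convex function of
`⟪a, b⟫ ∈ [-r s, r s]`: it is `(r² + 2⟪a, b⟫ + s²)^(q/2)` minus a linear term. So it suffices
to bound it at the endpoints `⟪a, b⟫ = ± r s`, which is the one-dimensional inequality at
`x = r`, `y = ± s`. That one is Taylor's formula for `u ↦ |u|^q`, whose second derivative
`q(q-1)|u|^(q-2)` is at most `q(q-1)(|x| + |y|)^(q-2) ≤ q(q-1) 2^(q-3) (|x|^(q-2) + |y|^(q-2))`
between `x` and `x + y`.
-/

open Set RealInnerProductSpace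

theorem ConvexOn.add_deriv_mul_sub_le {S : Set ℝ} {f : ℝ → ℝ} {f' x y : ℝ}
    (hfc : ConvexOn ℝ S f) (hx : x ∈ S) (hy : y ∈ S) (hf : HasDerivAt f f' x) :
    f x + f' * (y - x) ≤ f y := by
  rcases lt_trichotomy x y with hxy | rfl | hyx
  · have h := hfc.le_slope_of_hasDerivAt hx hy hxy hf
    rw [slope_def_field, le_div_iff₀ (sub_pos.2 hxy)] at h
    linarith
  · simp
  · have h := hfc.slope_le_of_hasDerivAt hy hx hyx hf
    rw [slope_def_field, div_le_iff₀ (sub_pos.2 hyx)] at h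
    linarith

theorem sub_sub_deriv_mul_le_of_deriv2_le {f f' f'' : ℝ → ℝ} {x y M : ℝ}
    (hf : ∀ u ∈ uIcc x y, HasDerivAt f (f' u) u) (hf' : ∀ u ∈ uIcc x y, HasDerivAt f' (f'' u) u)
    (hM : ∀ u ∈ uIcc x y, f'' u ≤ M) :
    f y - f x - f' x * (y - x) ≤ M / 2 * (y - x) ^ 2 := by
  have hG : ∀ u ∈ uIcc x y, HasDerivAt (fun u ↦ M / 2 * u ^ 2 - f u) (M * u - f' u) u :=
    fun u hu ↦ (((hasDerivAt_pow 2 u).const_mul (M / 2)).sub (hf u hu)).congr_deriv (by ring)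
  have hG' : ∀ u ∈ uIcc x y, HasDerivAt (fun u ↦ M * u - f' u) (M - f'' u) u :=
    fun u hu ↦ (((hasDerivAt_id' u).const_mul M).sub (hf' u hu)).congr_deriv (by ring)
  have hconv : ConvexOn ℝ (uIcc x y) (fun u ↦ M / 2 * u ^ 2 - f u) :=
    convexOn_of_hasDerivWithinAt2_nonneg (convex_uIcc x y)
      (fun u hu ↦ (hG u hu).continuousAt.continuousWithinAt)
      (fun u hu ↦ (hG u (interior_subset hu)).hasDerivWithinAt)
      (fun u hu ↦ (hG' u (interior_subset hu)).hasDerivWithinAt)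
      (fun u hu ↦ sub_nonneg.2 (hM u (interior_subset hu)))
  have := hconv.add_deriv_mul_sub_le left_mem_uIcc right_mem_uIcc (hG x left_mem_uIcc)
  linear_combination this

theorem Real.rpow_add_le_mul_rpow_add_rpow {a b p : ℝ} (ha : 0 ≤ a) (hb : 0 ≤ b) (hp : 1 ≤ p) :
    (a + b) ^ p ≤ 2 ^ (p - 1) * (a ^ p + b ^ p) := by
  lift a to NNReal using ha
  lift b to NNReal using hb
  exact_mod_cast NNReal.rpow_add_le_mul_rpow_add_rpow a b hp

theorem abs_rpow_sub_two_mul_sq {p : ℝ} (hp : p ≠ 0) (x : ℝ) : |x| ^ (p - 2) * x ^ 2 = |x| ^ p := by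
  rw [← sq_abs, ← Real.rpow_natCast, ← Real.rpow_add' (abs_nonneg x) (by simpa using hp)]
  norm_num

theorem sq_rpow_div_two (q x : ℝ) : (x ^ 2) ^ (q / 2) = |x| ^ q := by
  rw [← sq_abs, ← Real.rpow_natCast_mul (abs_nonneg x)]
  congr 1
  push_cast
  ring

theorem hasDerivAt_abs_rpow_mul_self {p : ℝ} (hp : 1 < p) (x : ℝ) :
    HasDerivAt (fun u ↦ |u| ^ p * u) ((p + 1) * |x| ^ p) x := by
  refine ((hasDerivAt_abs_rpow x hp).mul (hasDerivAt_id' x)).congr_deriv ?_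
  linear_combination p * abs_rpow_sub_two_mul_sq (by positivity) x

theorem abs_le_abs_add_abs_of_mem_uIcc {x y u : ℝ} (hu : u ∈ uIcc x (x + y)) :
    |u| ≤ |x| + |y| := by
  rcases mem_uIcc.1 hu with h | h <;>
    exact abs_le.2 ⟨by linarith [neg_abs_le x, neg_abs_le y, abs_nonneg x, abs_nonneg y],
      by linarith [le_abs_self x, le_abs_self y, abs_nonneg x, abs_nonneg y]⟩

theorem abs_add_rpow_sub_sub_le {q : ℝ} (hq : 3 < q) (x y : ℝ) :
    |x + y| ^ q - |x| ^ q - q * |x| ^ (q - 2) * x * y ≤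
      q * (q - 1) * 2 ^ (q - 4) * (|x| ^ (q - 2) * y ^ 2 + |y| ^ q) := by
  have hf : ∀ u : ℝ, HasDerivAt (fun u ↦ |u| ^ q) (q * (|u| ^ (q - 2) * u)) u := fun u ↦
    (hasDerivAt_abs_rpow u (by linarith)).congr_deriv (by ring)
  have hf' : ∀ u : ℝ,
      HasDerivAt (fun u ↦ q * (|u| ^ (q - 2) * u)) (q * (q - 1) * |u| ^ (q - 2)) u :=
    fun u ↦ ((hasDerivAt_abs_rpow_mul_self (by linarith) u).const_mul q).congr_deriv (by ring)
  have hM : ∀ u ∈ uIcc x (x + y),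
      q * (q - 1) * |u| ^ (q - 2) ≤ q * (q - 1) * (|x| + |y|) ^ (q - 2) := by
    intro u hu
    gcongr
    · nlinarith
    · linarith
    · exact abs_le_abs_add_abs_of_mem_uIcc hu
  have htaylor := sub_sub_deriv_mul_le_of_deriv2_le (fun u _ ↦ hf u) (fun u _ ↦ hf' u) hM
  have hmean : (|x| + |y|) ^ (q - 2) ≤ 2 * 2 ^ (q - 4) * (|x| ^ (q - 2) + |y| ^ (q - 2)) := by
    have h := Real.rpow_add_le_mul_rpow_add_rpow (abs_nonneg x) (abs_nonneg y)
      (p := q - 2) (by linarith)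
    rwa [show q - 2 - 1 = (q - 4) + 1 by ring, Real.rpow_add_one two_ne_zero,
      mul_comm _ (2 : ℝ)] at h
  rw [add_sub_cancel_left] at htaylor
  calc |x + y| ^ q - |x| ^ q - q * |x| ^ (q - 2) * x * y
      ≤ q * (q - 1) / 2 * (|x| + |y|) ^ (q - 2) * y ^ 2 := by linear_combination htaylor
    _ ≤ q * (q - 1) / 2 * (2 * 2 ^ (q - 4) * (|x| ^ (q - 2) + |y| ^ (q - 2))) * y ^ 2 := by
      gcongr
      nlinarith
    _ = q * (q - 1) * 2 ^ (q - 4) * (|x| ^ (q - 2) * y ^ 2 + |y| ^ q) := by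
      linear_combination q * (q - 1) * 2 ^ (q - 4) * abs_rpow_sub_two_mul_sq (by positivity) y

section InnerProductSpace

variable {E : Type*} [NormedAddCommGroup E] [InnerProductSpace ℝ E]

theorem norm_add_rpow_sub_mul_inner_le_max {q : ℝ} (hq : 2 ≤ q) (k : ℝ) (a b : E) :
    ‖a + b‖ ^ q - k * ⟪a, b⟫ ≤
      max (|‖a‖ - ‖b‖| ^ q + k * (‖a‖ * ‖b‖)) (|‖a‖ + ‖b‖| ^ q - k * (‖a‖ * ‖b‖)) := by
  set G : ℝ → ℝ := fun w ↦ w ^ (q / 2) - k / 2 * w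
  have hG : ConvexOn ℝ (Ici 0) G :=
    (convexOn_rpow (by linarith)).sub ((LinearMap.mul ℝ ℝ (k / 2)).concaveOn (convex_Ici 0))
  have hG_sq : ∀ z : ℝ, G (z ^ 2) = |z| ^ q - k / 2 * z ^ 2 := fun z ↦ by
    simp only [G, sq_rpow_div_two]
  have hsq := norm_add_sq_real a b
  have hc := abs_le.1 (abs_real_inner_le_norm a b)
  have hw : ‖a + b‖ ^ 2 ∈ segment ℝ ((‖a‖ - ‖b‖) ^ 2) ((‖a‖ + ‖b‖) ^ 2) := by
    rw [segment_eq_Icc (by nlinarith [norm_nonneg a, norm_nonneg b])]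
    constructor <;> nlinarith
  have hmax := hG.le_on_segment (mem_Ici.2 (sq_nonneg _)) (mem_Ici.2 (sq_nonneg _)) hw
  rw [hG_sq, hG_sq, hG_sq, abs_norm] at hmax
  calc ‖a + b‖ ^ q - k * ⟪a, b⟫
      = (‖a + b‖ ^ q - k / 2 * ‖a + b‖ ^ 2) + k / 2 * (‖a‖ ^ 2 + ‖b‖ ^ 2) := by
        rw [hsq]; ring
    _ ≤ max (|‖a‖ - ‖b‖| ^ q - k / 2 * (‖a‖ - ‖b‖) ^ 2)
          (|‖a‖ + ‖b‖| ^ q - k / 2 * (‖a‖ + ‖b‖) ^ 2) + k / 2 * (‖a‖ ^ 2 + ‖b‖ ^ 2) := by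
        gcongr
    _ = max (|‖a‖ - ‖b‖| ^ q + k * (‖a‖ * ‖b‖)) (|‖a‖ + ‖b‖| ^ q - k * (‖a‖ * ‖b‖)) := by
        rw [← max_add_add_right]
        congr 1 <;> ring

theorem norm_add_rpow_sub_sub_le {q : ℝ} (hq : 3 < q) (a b : E) :
    ‖a + b‖ ^ q - ‖a‖ ^ q - q * ‖a‖ ^ (q - 2) * ⟪a, b⟫ ≤
      q * (q - 1) * 2 ^ (q - 4) * (‖a‖ ^ (q - 2) * ‖b‖ ^ 2 + ‖b‖ ^ q) := by
  have hmax := norm_add_rpow_sub_mul_inner_le_max (by linarith) (q * ‖a‖ ^ (q - 2)) a b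
  have hneg := abs_add_rpow_sub_sub_le hq ‖a‖ (-‖b‖)
  have hpos := abs_add_rpow_sub_sub_le hq ‖a‖ ‖b‖
  simp only [abs_norm, abs_neg, neg_sq, ← sub_eq_add_neg] at hneg hpos
  rw [le_max_iff] at hmax
  rcases hmax with h | h <;> linarith

end InnerProductSpace

theorem stmt_2_general (d : ℕ) (q₀ : ℝ) (hq₀ : 3 < q₀)
    (a b : EuclideanSpace ℝ (Fin d)) :
    ‖a + b‖ ^ q₀ - ‖a‖ ^ q₀ - q₀ * ‖a‖ ^ (q₀ - 2) * ⟪a, b⟫ ≤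
      q₀ * (q₀ - 1) * (2:ℝ) ^ (q₀ - 4) * (‖a‖ ^ (q₀ - 2) * ‖b‖ ^ 2 + ‖b‖ ^ q₀) :=
  norm_add_rpow_sub_sub_le hq₀ a b

/-- Inequality (eq:biprdt_mvt) of the paper, case `q₀ > 3`. -/
theorem stmt_2 (d : ℕ) (hd : 1 ≤ d) (q₀ : ℝ) (hq₀ : 3 < q₀)
    (a b : EuclideanSpace ℝ (Fin d)) :
    ‖a + b‖ ^ q₀ - ‖a‖ ^ q₀ - q₀ * ‖a‖ ^ (q₀ - 2) * ⟪a, b⟫ ≤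
      q₀ * (q₀ - 1) * (2:ℝ) ^ (q₀ - 4) * (‖a‖ ^ (q₀ - 2) * ‖b‖ ^ 2 + ‖b‖ ^ q₀) :=
  stmt_2_general d q₀ hq₀ a b
end

section
/- Let d ≥ 1 be an integer and q₀ a real number with 2 < q₀ ≤ 3. Then for all a, b ∈ ℝ^d: |a+b|^{q₀} − |a|^{q₀} − q₀·|a|^{q₀−2}·⟨a,b⟩ ≤ (q₀(q₀−1)/2)·(|a|^{q₀−2}·|b|² + |b|^{q₀}). -/
/-!
Along the segment `t ↦ a + t • b`, the function `f t = ‖a + t • b‖ ^ q` has derivative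
`q * ⟪‖x‖ ^ (q - 2) • x, b⟫` at `x = a + t • b`. For `α = q - 2 ∈ [0, 1]` the map `x ↦ ‖x‖ ^ α • x`
satisfies `‖‖x‖ ^ α • x - ‖y‖ ^ α • y‖ ≤ (1 + α) M ^ α ‖x - y‖` on the ball of radius `M`
(Bernoulli's inequality), so `f' t - f' 0 ≤ q (q - 1) (‖a‖ + ‖b‖) ^ α ‖b‖² t` on `[0, 1]`.
Integrating gives `f 1 - f 0 - f' 0 ≤ q (q - 1) / 2 (‖a‖ + ‖b‖) ^ α ‖b‖²`, and subadditivity of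
`r ↦ r ^ α` splits `(‖a‖ + ‖b‖) ^ α ‖b‖²` into `‖a‖ ^ α ‖b‖² + ‖b‖ ^ q`.
-/

open RealInnerProductSpace

theorem Real.rpow_sub_rpow_mul_le {α : ℝ} (hα₀ : 0 ≤ α) (hα₁ : α ≤ 1) {s t : ℝ} (ht : 0 ≤ t)
    (hts : t ≤ s) : (s ^ α - t ^ α) * t ≤ α * s ^ α * (s - t) := by
  have hs : 0 ≤ s := ht.trans hts
  rcases ht.eq_or_lt with rfl | ht
  · simp only [mul_zero, sub_zero]
    positivity
  have bernoulli : (s / t) ^ α ≤ 1 + α * (s / t - 1) := by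
    simpa using rpow_one_add_le_one_add_mul_self (s := s / t - 1)
      (by linarith [div_nonneg hs ht.le]) hα₀ hα₁
  have hsplit : s ^ α = t ^ α * (s / t) ^ α := by
    rw [← Real.mul_rpow ht.le (div_nonneg hs ht.le), mul_div_cancel₀ _ ht.ne']
  have key : (s ^ α - t ^ α) * t ≤ α * t ^ α * (s - t) := by
    calc (s ^ α - t ^ α) * t = t ^ α * t * ((s / t) ^ α - 1) := by rw [hsplit]; ring
      _ ≤ t ^ α * t * (α * (s / t - 1)) := by gcongr; linarith
      _ = α * t ^ α * (s - t) := by field_simp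
  calc (s ^ α - t ^ α) * t ≤ α * t ^ α * (s - t) := key
    _ ≤ α * s ^ α * (s - t) := by gcongr

section HolderGradient

variable {E : Type*} [NormedAddCommGroup E] [NormedSpace ℝ E] {α : ℝ}

theorem norm_rpow_smul_sub_rpow_smul_le_of_norm_le (hα₀ : 0 ≤ α) (hα₁ : α ≤ 1) {x y : E}
    (h : ‖y‖ ≤ ‖x‖) :
    ‖‖x‖ ^ α • x - ‖y‖ ^ α • y‖ ≤ (1 + α) * ‖x‖ ^ α * ‖x - y‖ := by
  have hmono : ‖y‖ ^ α ≤ ‖x‖ ^ α := Real.rpow_le_rpow (norm_nonneg _) h hα₀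
  have hsplit : ‖x‖ ^ α • x - ‖y‖ ^ α • y = ‖x‖ ^ α • (x - y) + (‖x‖ ^ α - ‖y‖ ^ α) • y := by
    rw [smul_sub, sub_smul]; abel
  calc ‖‖x‖ ^ α • x - ‖y‖ ^ α • y‖
      ≤ ‖x‖ ^ α * ‖x - y‖ + (‖x‖ ^ α - ‖y‖ ^ α) * ‖y‖ := by
        rw [hsplit]
        refine (norm_add_le _ _).trans_eq ?_
        rw [norm_smul, norm_smul, Real.norm_of_nonneg (by positivity),
          Real.norm_of_nonneg (sub_nonneg.2 hmono)]
    _ ≤ ‖x‖ ^ α * ‖x - y‖ + α * ‖x‖ ^ α * (‖x‖ - ‖y‖) :=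
        add_le_add_right (Real.rpow_sub_rpow_mul_le hα₀ hα₁ (norm_nonneg _) h) _
    _ ≤ ‖x‖ ^ α * ‖x - y‖ + α * ‖x‖ ^ α * ‖x - y‖ := by
        gcongr
        exact norm_sub_norm_le x y
    _ = (1 + α) * ‖x‖ ^ α * ‖x - y‖ := by ring

theorem norm_rpow_smul_sub_rpow_smul_le (hα₀ : 0 ≤ α) (hα₁ : α ≤ 1) {x y : E} {M : ℝ}
    (hx : ‖x‖ ≤ M) (hy : ‖y‖ ≤ M) :
    ‖‖x‖ ^ α • x - ‖y‖ ^ α • y‖ ≤ (1 + α) * M ^ α * ‖x - y‖ := by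
  rcases le_total ‖y‖ ‖x‖ with h | h
  · refine (norm_rpow_smul_sub_rpow_smul_le_of_norm_le hα₀ hα₁ h).trans ?_
    gcongr
  · rw [norm_sub_rev, norm_sub_rev x]
    refine (norm_rpow_smul_sub_rpow_smul_le_of_norm_le hα₀ hα₁ h).trans ?_
    gcongr

end HolderGradient

theorem sub_sub_deriv_le_of_deriv_sub_le {f f' : ℝ → ℝ} {L : ℝ}
    (hf : ∀ t ∈ Set.Icc (0 : ℝ) 1, HasDerivAt f (f' t) t)
    (hf' : ∀ t ∈ Set.Ioo (0 : ℝ) 1, f' t - f' 0 ≤ L * t) :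
    f 1 - f 0 - f' 0 ≤ L / 2 := by
  set g : ℝ → ℝ := fun t => f t - f' 0 * t - L / 2 * t ^ 2
  have hg : ∀ t ∈ Set.Icc (0 : ℝ) 1, HasDerivAt g (f' t - f' 0 - L * t) t := by
    intro t ht
    refine (((hf t ht).sub ((hasDerivAt_id t).const_mul (f' 0))).sub
      ((hasDerivAt_pow 2 t).const_mul (L / 2))).congr_deriv ?_
    norm_num
    ring
  have hanti : AntitoneOn g (Set.Icc 0 1) := by
    refine antitoneOn_of_deriv_nonpos (convex_Icc 0 1)
      (fun t ht => (hg t ht).continuousAt.continuousWithinAt)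
      (fun t ht => (hg t (interior_subset ht)).differentiableAt.differentiableWithinAt) ?_
    intro t ht
    rw [interior_Icc] at ht
    rw [(hg t (Set.Ioo_subset_Icc_self ht)).deriv]
    linarith [hf' t ht]
  have := hanti (Set.left_mem_Icc.2 zero_le_one) (Set.right_mem_Icc.2 zero_le_one) zero_le_one
  simp only [g] at this
  linarith

section NormRpow

variable {E : Type*} [NormedAddCommGroup E] [InnerProductSpace ℝ E] {q : ℝ}

theorem hasDerivAt_norm_add_smul_rpow (hq : 1 < q) (a b : E) (t : ℝ) :
    HasDerivAt (fun s : ℝ => ‖a + s • b‖ ^ q)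
      (q * ‖a + t • b‖ ^ (q - 2) * ⟪a + t • b, b⟫) t := by
  have hline : HasDerivAt (fun s : ℝ => a + s • b) b t := by
    simpa using ((hasDerivAt_id t).smul_const b).const_add a
  refine ((hasFDerivAt_norm_rpow (a + t • b) hq).comp_hasDerivAt t hline).congr_deriv ?_
  simp only [smul_apply, innerSL_apply_apply, smul_eq_mul]

theorem norm_add_rpow_sub_le (hq₂ : 2 ≤ q) (hq₃ : q ≤ 3) (a b : E) :
    ‖a + b‖ ^ q - ‖a‖ ^ q - q * ‖a‖ ^ (q - 2) * ⟪a, b⟫ ≤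
      q * (q - 1) / 2 * (‖a‖ ^ (q - 2) * ‖b‖ ^ 2 + ‖b‖ ^ q) := by
  set R := ‖a‖ + ‖b‖
  have hα₀ : 0 ≤ q - 2 := by linarith
  have hα₁ : q - 2 ≤ 1 := by linarith
  set f' : ℝ → ℝ := fun t => q * ‖a + t • b‖ ^ (q - 2) * ⟪a + t • b, b⟫
  have hderiv :
      ∀ t ∈ Set.Ioo (0 : ℝ) 1, f' t - f' 0 ≤ q * (q - 1) * R ^ (q - 2) * ‖b‖ ^ 2 * t := by
    intro t ⟨ht₀, ht₁⟩
    have hxR : ‖a + t • b‖ ≤ R := by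
      refine (norm_add_le _ _).trans ?_
      rw [norm_smul, Real.norm_of_nonneg ht₀.le]
      nlinarith [norm_nonneg b]
    have hgrad :=
      norm_rpow_smul_sub_rpow_smul_le hα₀ hα₁ hxR (le_add_of_nonneg_right (norm_nonneg b))
    rw [add_sub_cancel_left, norm_smul, Real.norm_of_nonneg ht₀.le] at hgrad
    calc f' t - f' 0 = q * ⟪‖a + t • b‖ ^ (q - 2) • (a + t • b) - ‖a‖ ^ (q - 2) • a, b⟫ := by
          simp only [f', zero_smul, add_zero, inner_sub_left, real_inner_smul_left]
          ring
      _ ≤ q * (‖‖a + t • b‖ ^ (q - 2) • (a + t • b) - ‖a‖ ^ (q - 2) • a‖ * ‖b‖) := by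
          gcongr; exact real_inner_le_norm _ _
      _ ≤ q * ((1 + (q - 2)) * R ^ (q - 2) * (t * ‖b‖) * ‖b‖) := by gcongr
      _ = q * (q - 1) * R ^ (q - 2) * ‖b‖ ^ 2 * t := by ring
  have htaylor := sub_sub_deriv_le_of_deriv_sub_le
    (fun t _ => hasDerivAt_norm_add_smul_rpow (by linarith) a b t) hderiv
  simp only [zero_smul, add_zero, one_smul] at htaylor
  have hR : R ^ (q - 2) * ‖b‖ ^ 2 ≤ ‖a‖ ^ (q - 2) * ‖b‖ ^ 2 + ‖b‖ ^ q := by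
    have hbq : ‖b‖ ^ (q - 2) * ‖b‖ ^ 2 = ‖b‖ ^ q := by
      rw [← Real.rpow_natCast, ← Real.rpow_add' (norm_nonneg _) (by norm_num; linarith)]
      norm_num
    rw [← hbq, ← add_mul]
    gcongr
    exact Real.rpow_add_le_add_rpow (norm_nonneg _) (norm_nonneg _) hα₀ hα₁
  have hq : 0 ≤ q * (q - 1) / 2 := by nlinarith
  linarith [mul_le_mul_of_nonneg_left hR hq]

end NormRpow

theorem stmt_3_general (d : ℕ) (q₀ : ℝ) (hq₀ : 2 < q₀) (hq₀' : q₀ ≤ 3)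
    (a b : EuclideanSpace ℝ (Fin d)) :
    ‖a + b‖ ^ q₀ - ‖a‖ ^ q₀ - q₀ * ‖a‖ ^ (q₀ - 2) * ⟪a, b⟫ ≤
      q₀ * (q₀ - 1) / 2 * (‖a‖ ^ (q₀ - 2) * ‖b‖ ^ 2 + ‖b‖ ^ q₀) :=
  norm_add_rpow_sub_le hq₀.le hq₀' a b

/-- Inequality (eq:biprdt_mvt1) of the paper, case `2 < q₀ ≤ 3`. -/
theorem stmt_3 (d : ℕ) (hd : 1 ≤ d) (q₀ : ℝ) (hq₀ : 2 < q₀) (hq₀' : q₀ ≤ 3)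
    (a b : EuclideanSpace ℝ (Fin d)) :
    ‖a + b‖ ^ q₀ - ‖a‖ ^ q₀ - q₀ * ‖a‖ ^ (q₀ - 2) * ⟪a, b⟫ ≤
      q₀ * (q₀ - 1) / 2 * (‖a‖ ^ (q₀ - 2) * ‖b‖ ^ 2 + ‖b‖ ^ q₀) :=
  stmt_3_general d q₀ hq₀ hq₀' a b
end

section
/- Let p ≥ 4 be a real number. Then for all x, y ∈ ℝ: |x·(1+x²)^{1/p} − y·(1+y²)^{1/p}| ≤ (3/2)·|x−y|·∫₀¹ (1 + (y + θ(x−y))²)^{1/p} dθ. -/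
/-!
Write `F t = t (1 + t²)^r`. By the fundamental theorem of calculus along the segment from `y` to
`x`, `F x - F y = (x - y) ∫₀¹ F'(y + θ (x - y)) dθ`, and
`F' t = (1 + t²)^r + 2 r t² (1 + t²)^(r - 1)` lies between `0` and `(1 + 2r) (1 + t²)^r`
because `t² ≤ 1 + t²`. For `r = 1/p` with `p ≥ 4` the constant `1 + 2r` is at most `3/2`.
-/

open MeasureTheory

theorem norm_sub_le_mul_integral_of_contDiff {E : Type*} [NormedAddCommGroup E]
    [NormedSpace ℝ E] [CompleteSpace E] {f : ℝ → E} {g : ℝ → ℝ} (hf : ContDiff ℝ 1 f)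
    (hg : Continuous g) (hbound : ∀ t, ‖deriv f t‖ ≤ g t) (x y : ℝ) :
    ‖f x - f y‖ ≤ |x - y| * ∫ θ in (0:ℝ)..1, g (y + θ * (x - y)) := by
  have hf' : Continuous (deriv f) := hf.continuous_deriv le_rfl
  have hderiv : ∀ θ : ℝ, HasDerivAt (fun θ => f (y + θ * (x - y)))
      ((x - y) • deriv f (y + θ * (x - y))) θ := by
    intro θ
    have hline := ((hasDerivAt_id θ).mul_const (x - y)).const_add y
    simpa [Function.comp_def] using (hf.differentiable one_ne_zero _).hasDerivAt.scomp θ hline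
  have hftc : ∫ θ in (0:ℝ)..1, (x - y) • deriv f (y + θ * (x - y)) = f x - f y := by
    rw [intervalIntegral.integral_eq_sub_of_hasDerivAt (fun θ _ => hderiv θ)
      ((by fun_prop : Continuous _).intervalIntegrable 0 1)]
    simp
  calc ‖f x - f y‖ = ‖∫ θ in (0:ℝ)..1, (x - y) • deriv f (y + θ * (x - y))‖ := by rw [hftc]
    _ ≤ ∫ θ in (0:ℝ)..1, |x - y| * g (y + θ * (x - y)) := by
      refine intervalIntegral.norm_integral_le_of_norm_le zero_le_one ?_
        ((by fun_prop : Continuous _).intervalIntegrable 0 1)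
      refine Filter.Eventually.of_forall fun θ _ => ?_
      rw [norm_smul, Real.norm_eq_abs]
      exact mul_le_mul_of_nonneg_left (hbound _) (abs_nonneg _)
    _ = |x - y| * ∫ θ in (0:ℝ)..1, g (y + θ * (x - y)) := intervalIntegral.integral_const_mul _ _

theorem contDiff_mul_one_add_sq_rpow (r : ℝ) :
    ContDiff ℝ 1 fun s : ℝ => s * (1 + s ^ 2) ^ r := by
  have hbase : ContDiff ℝ 1 fun s : ℝ => 1 + s ^ 2 := by fun_prop
  exact contDiff_id.mul (hbase.rpow_const_of_ne fun s => by positivity)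

theorem hasDerivAt_mul_one_add_sq_rpow (r t : ℝ) :
    HasDerivAt (fun s : ℝ => s * (1 + s ^ 2) ^ r)
      ((1 + t ^ 2) ^ r + 2 * r * (t ^ 2 * (1 + t ^ 2) ^ (r - 1))) t := by
  have hbase : HasDerivAt (fun s : ℝ => 1 + s ^ 2) (2 * t) t := by
    simpa using (hasDerivAt_pow 2 t).const_add 1
  exact ((hasDerivAt_id' t).fun_mul (hbase.rpow_const (Or.inl (by positivity)))).congr_deriv
    (by ring)

theorem sq_mul_one_add_sq_rpow_sub_one_le (r t : ℝ) :
    t ^ 2 * (1 + t ^ 2) ^ (r - 1) ≤ (1 + t ^ 2) ^ r := by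
  have hpos : 0 < 1 + t ^ 2 := by positivity
  calc t ^ 2 * (1 + t ^ 2) ^ (r - 1) ≤ (1 + t ^ 2) * (1 + t ^ 2) ^ (r - 1) := by
        gcongr
        linarith
    _ = (1 + t ^ 2) ^ r := by rw [Real.rpow_sub_one hpos.ne', mul_div_cancel₀ _ hpos.ne']

theorem abs_deriv_mul_one_add_sq_rpow_le {r : ℝ} (hr : 0 ≤ r) (t : ℝ) :
    |deriv (fun s : ℝ => s * (1 + s ^ 2) ^ r) t| ≤ (1 + 2 * r) * (1 + t ^ 2) ^ r := by
  rw [(hasDerivAt_mul_one_add_sq_rpow r t).deriv, abs_of_nonneg (by positivity)]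
  nlinarith [sq_mul_one_add_sq_rpow_sub_one_le r t]

/-- Inequality (eq:gam_dif) in Appendix A of the paper. -/
theorem stmt_14 (p : ℝ) (hp : 4 ≤ p) (x y : ℝ) :
    |x * (1 + x ^ 2) ^ (1 / p) - y * (1 + y ^ 2) ^ (1 / p)| ≤
      3 / 2 * |x - y| *
        ∫ θ in (0:ℝ)..1, (1 + (y + θ * (x - y)) ^ 2) ^ (1 / p) := by
  have hr : 0 ≤ 1 / p := by positivity
  have hconst : 1 + 2 * (1 / p) ≤ 3 / 2 := by
    rw [← le_sub_iff_add_le', mul_one_div, div_le_iff₀ (by linarith)]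
    linarith
  have hbound (t : ℝ) :
      ‖deriv (fun s : ℝ => s * (1 + s ^ 2) ^ (1 / p)) t‖ ≤ 3 / 2 * (1 + t ^ 2) ^ (1 / p) :=
    (abs_deriv_mul_one_add_sq_rpow_le hr t).trans (by gcongr)
  calc _ ≤ |x - y| * ∫ θ in (0:ℝ)..1, 3 / 2 * (1 + (y + θ * (x - y)) ^ 2) ^ (1 / p) :=
        norm_sub_le_mul_integral_of_contDiff (contDiff_mul_one_add_sq_rpow _)
          (by fun_prop) hbound x y
    _ = _ := by rw [intervalIntegral.integral_const_mul]; ring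
end

section
/- Let q ≥ 4 and p ≥ q be real numbers, β̂, σ̂, γ̂ > 0, and let ρ be a measure on ℝ with m₂ := ∫_ℝ |z|² ρ(dz) < ∞ and m_q := ∫_ℝ |z|^q ρ(dz) < ∞, satisfying σ̂²(q−1) + 2^{q−1}(q−1)(γ̂²·m₂ + γ̂^q·m_q) ≤ 2β̂. Define β(s) = 2(s − ⌊s + 1/2⌋), μ(s,x) = β(s)x − β̂x³, σ(t,x) = σ̂·√t·(1−x²), and γ(t,x,z) = γ̂·√t·x·(1+x²)^{1/p}·z. Then there exists a constant K > 0 such that for all s, t ∈ [0,1] and all x ∈ ℝ: 2|x|^{q−2}·x·μ(s,x) + (q−1)·|x|^{q−2}·|σ(t,x)|² + 2(q−1)·∫_ℝ |γ(t,x,z)|²·( ∫₀¹ (1−θ)·| x + θ|γ(t,x,z)| |^{q−2} dθ ) ρ(dz) ≤ K·(1 + |x|^q). -/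
open MeasureTheory

/-- The sawtooth function `β(s) = 2(s − ⌊s + 1/2⌋)`. -/
noncomputable def sawtooth (s : ℝ) : ℝ := 2 * (s - (⌊s + 1/2⌋ : ℤ))

/-- The double-well drift `μ(s,x) = β(s)x − β̂x³`. -/
noncomputable def μdw (β' s x : ℝ) : ℝ := sawtooth s * x - β' * x ^ 3

/-- The double-well diffusion coefficient `σ(t,x) = σ̂·√t·(1−x²)`. -/
noncomputable def σdw (σ' t x : ℝ) : ℝ := σ' * Real.sqrt t * (1 - x ^ 2)

/-- The double-well jump coefficient `γ(t,x,z) = γ̂·√t·x·(1+x²)^{1/p}·z`. -/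
noncomputable def γdw (γ' p t x z : ℝ) : ℝ :=
  γ' * Real.sqrt t * x * (1 + x ^ 2) ^ (1 / p) * z

lemma sawtooth_le_one (s : ℝ) : sawtooth s ≤ 1 := by
  unfold sawtooth
  have h : (s + 1/2) - 1 < (⌊s + 1/2⌋ : ℝ) := Int.sub_one_lt_floor _
  linarith

set_option maxHeartbeats 1000000 in
/-- Verification (Appendix A of the paper) that the coefficients of the
Lévy-driven double-well SDE satisfy the `q`-th moment coercivity condition of
Assumption 2.5 under the parameter constraint (eq:for_gamhat1). -/
theorem stmt_16 (q p : ℝ) (hq : 4 ≤ q) (hqp : q ≤ p)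
    (β' σ' γ' : ℝ) (hβ : 0 < β') (hσ : 0 < σ') (hγ : 0 < γ')
    (ρ : Measure ℝ)
    (h2 : Integrable (fun z : ℝ => |z| ^ 2) ρ)
    (hqi : Integrable (fun z : ℝ => |z| ^ q) ρ)
    (hconstraint :
      σ' ^ 2 * (q - 1) +
        (2:ℝ) ^ (q - 1) * (q - 1) *
          (γ' ^ 2 * (∫ z, |z| ^ 2 ∂ρ) + γ' ^ q * (∫ z, |z| ^ q ∂ρ)) ≤ 2 * β') :
    ∃ K > (0:ℝ), ∀ s ∈ Set.Icc (0:ℝ) 1, ∀ t ∈ Set.Icc (0:ℝ) 1, ∀ x : ℝ,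
      2 * |x| ^ (q - 2) * x * μdw β' s x
        + (q - 1) * |x| ^ (q - 2) * |σdw σ' t x| ^ 2
        + 2 * (q - 1) *
            ∫ z, |γdw γ' p t x z| ^ 2 *
              (∫ θ in (0:ℝ)..1, (1 - θ) * |x + θ * abs (γdw γ' p t x z)| ^ (q - 2)) ∂ρ
        ≤ K * (1 + |x| ^ q) := by
  have hq1 : (0:ℝ) < q - 1 := by linarith
  have hp0 : (0:ℝ) < p := by linarith
  set m2 := ∫ z, |z| ^ 2 ∂ρ with hm2
  set mq := ∫ z, |z| ^ q ∂ρ with hmq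
  have hm2_nonneg : 0 ≤ m2 := by
    rw [hm2]; exact integral_nonneg fun z => by positivity
  have hmq_nonneg : 0 ≤ mq := by
    rw [hmq]; exact integral_nonneg fun z => Real.rpow_nonneg (abs_nonneg z) q
  set M := γ' ^ 2 * m2 + γ' ^ q * mq with hM
  have hγq : (0:ℝ) ≤ γ' ^ q := Real.rpow_nonneg hγ.le q
  have hM_nonneg : 0 ≤ M := by
    rw [hM]
    exact add_nonneg (mul_nonneg (by positivity) hm2_nonneg) (mul_nonneg hγq hmq_nonneg)
  have h2pow2 : (0:ℝ) < (2:ℝ) ^ (q - 2) := Real.rpow_pos_of_pos (by norm_num) _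
  have h2pow3 : (0:ℝ) < (2:ℝ) ^ (q - 3) := Real.rpow_pos_of_pos (by norm_num) _
  have h23 : (2:ℝ) ^ (q - 2) = 2 * 2 ^ (q - 3) := by
    rw [show q - 2 = 1 + (q - 3) by ring, Real.rpow_add (by norm_num : (0:ℝ) < 2),
      Real.rpow_one]
  have h2pow_le : (2:ℝ) ^ (q - 2) ≤ 2 ^ (q - 1) :=
    Real.rpow_le_rpow_of_exponent_le one_le_two (by linarith)
  refine ⟨2 + (q - 1) * σ' ^ 2 + (q - 1) * 2 ^ (q - 2) * M, ?_, ?_⟩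
  · have h1 : 0 ≤ (q - 1) * σ' ^ 2 := mul_nonneg hq1.le (sq_nonneg _)
    have h2' : 0 ≤ (q - 1) * 2 ^ (q - 2) * M :=
      mul_nonneg (mul_nonneg hq1.le h2pow2.le) hM_nonneg
    linarith
  intro s hs t ht x
  obtain ⟨ht0, ht1⟩ := ht
  have hst : Real.sqrt t ≤ 1 := Real.sqrt_le_one.mpr ht1
  have habs : (0:ℝ) ≤ |x| := abs_nonneg x
  set a := |x| ^ q with ha_def
  set b := |x| ^ (q + 2) with hb_def
  set e := |x| ^ (q - 2) with he_def
  have ha0 : 0 ≤ a := by rw [ha_def]; exact Real.rpow_nonneg habs q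
  have hb0 : 0 ≤ b := by rw [hb_def]; exact Real.rpow_nonneg habs _
  have he0 : 0 ≤ e := by rw [he_def]; exact Real.rpow_nonneg habs _
  have habs2 : |x| ^ ((2:ℕ):ℝ) = x ^ 2 := by rw [Real.rpow_natCast, sq_abs]
  have habs4 : |x| ^ ((4:ℕ):ℝ) = x ^ 4 := by
    rw [Real.rpow_natCast, pow_abs, abs_of_nonneg (by positivity)]
  have e2 : e * x ^ 2 = a := by
    rw [← habs2, he_def, ha_def,
      ← Real.rpow_add' habs (by push_cast; intro h; linarith : q - 2 + ((2:ℕ):ℝ) ≠ 0),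
      show q - 2 + ((2:ℕ):ℝ) = q by push_cast; ring]
  have e4 : e * x ^ 4 = b := by
    rw [← habs4, he_def, hb_def,
      ← Real.rpow_add' habs (by push_cast; intro h; linarith : q - 2 + ((4:ℕ):ℝ) ≠ 0),
      show q - 2 + ((4:ℕ):ℝ) = q + 2 by push_cast; ring]
  have a2 : a * x ^ 2 = b := by
    rw [← habs2, ha_def, hb_def,
      ← Real.rpow_add' habs (by push_cast; intro h; linarith : q + ((2:ℕ):ℝ) ≠ 0),
      show q + ((2:ℕ):ℝ) = q + 2 by push_cast; ring]
  have e_le : e ≤ 1 + a := by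
    rcases le_total |x| 1 with h | h
    · have h1 : e ≤ 1 := by
        rw [he_def]; exact Real.rpow_le_one habs h (by linarith)
      linarith
    · have h1 : e ≤ a := by
        rw [he_def, ha_def]
        exact Real.rpow_le_rpow_of_exponent_le h (by linarith)
      linarith
  -- drift term
  have hμ : 2 * e * x * μdw β' s x ≤ 2 * a - 2 * β' * b := by
    have hst1 : sawtooth s ≤ 1 := sawtooth_le_one s
    have expand : 2 * e * x * μdw β' s x
        = 2 * sawtooth s * (e * x ^ 2) - 2 * β' * (e * x ^ 4) := by
      unfold μdw; ring
    rw [expand, e2, e4]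
    have h5 : sawtooth s * a <= 1 * a := mul_le_mul_of_nonneg_right hst1 ha0
    linarith
  -- diffusion term
  have hσterm : (q - 1) * e * |σdw σ' t x| ^ 2 ≤ (q - 1) * σ' ^ 2 * (e + b) := by
    have hsq : |σdw σ' t x| ^ 2 = σ' ^ 2 * t * (1 - x ^ 2) ^ 2 := by
      rw [sq_abs]
      unfold σdw
      rw [mul_pow, mul_pow, Real.sq_sqrt ht0]
    rw [hsq]
    have h1 : t * (1 - x ^ 2) ^ 2 ≤ (1 - x ^ 2) ^ 2 := by
      have h5 : t * (1 - x ^ 2) ^ 2 ≤ 1 * (1 - x ^ 2) ^ 2 :=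
        mul_le_mul_of_nonneg_right ht1 (sq_nonneg _)
      linarith
    have hkey : e * (t * (1 - x ^ 2) ^ 2) ≤ e + b := by
      have h2' : e * (1 - x ^ 2) ^ 2 = e - 2 * a + b := by
        have h3 : e * (1 - x ^ 2) ^ 2 = e - 2 * (e * x ^ 2) + e * x ^ 4 := by ring
        rw [h3, e2, e4]
      have h5 : e * (t * (1 - x ^ 2) ^ 2) ≤ e * (1 - x ^ 2) ^ 2 :=
        mul_le_mul_of_nonneg_left h1 he0
      linarith
    calc (q - 1) * e * (σ' ^ 2 * t * (1 - x ^ 2) ^ 2)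
        = (q - 1) * σ' ^ 2 * (e * (t * (1 - x ^ 2) ^ 2)) := by ring
      _ ≤ (q - 1) * σ' ^ 2 * (e + b) :=
          mul_le_mul_of_nonneg_left hkey (mul_nonneg hq1.le (sq_nonneg _))
  -- jump term
  have hP : (0:ℝ) < (1 + x ^ 2) ^ (1 / p) := Real.rpow_pos_of_pos (by positivity) _
  have h1x : (1:ℝ) ≤ 1 + x ^ 2 := by linarith [sq_nonneg x]
  have hPsq : ((1 + x ^ 2) ^ (1 / p)) ^ 2 ≤ 1 + x ^ 2 := by
    have hexp : ((1 + x ^ 2) ^ (1 / p)) ^ (2:ℕ) = (1 + x ^ 2) ^ (1 / p * ((2:ℕ):ℝ)) := by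
      rw [Real.rpow_mul (by positivity), Real.rpow_natCast]
    rw [hexp]
    calc (1 + x ^ 2) ^ (1 / p * ((2:ℕ):ℝ)) ≤ (1 + x ^ 2) ^ (1:ℝ) := by
          apply Real.rpow_le_rpow_of_exponent_le h1x
          rw [div_mul_eq_mul_div, one_mul, div_le_one hp0]
          push_cast; linarith
      _ = 1 + x ^ 2 := Real.rpow_one _
  have hPq : ((1 + x ^ 2) ^ (1 / p)) ^ q ≤ 1 + x ^ 2 := by
    rw [← Real.rpow_mul (by positivity : (0:ℝ) ≤ 1 + x ^ 2)]
    calc (1 + x ^ 2) ^ (1 / p * q) ≤ (1 + x ^ 2) ^ (1:ℝ) := by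
          apply Real.rpow_le_rpow_of_exponent_le h1x
          rw [div_mul_eq_mul_div, one_mul, div_le_one hp0]
          linarith
      _ = 1 + x ^ 2 := Real.rpow_one _
  have hg_le : ∀ z : ℝ, |γdw γ' p t x z| ≤ γ' * (1 + x ^ 2) ^ (1 / p) * |x| * |z| := by
    intro z
    have hgabs : |γdw γ' p t x z|
        = γ' * Real.sqrt t * (1 + x ^ 2) ^ (1 / p) * |x| * |z| := by
      unfold γdw
      rw [abs_mul, abs_mul, abs_mul, abs_mul, abs_of_pos hγ,
        abs_of_nonneg (Real.sqrt_nonneg t), abs_of_pos hP]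
      ring
    rw [hgabs]
    have h0 : (0:ℝ) ≤ γ' * (1 + x ^ 2) ^ (1 / p) * |x| * |z| := by positivity
    calc γ' * Real.sqrt t * (1 + x ^ 2) ^ (1 / p) * |x| * |z|
        = Real.sqrt t * (γ' * (1 + x ^ 2) ^ (1 / p) * |x| * |z|) := by ring
      _ ≤ 1 * (γ' * (1 + x ^ 2) ^ (1 / p) * |x| * |z|) :=
          mul_le_mul_of_nonneg_right hst h0
      _ = γ' * (1 + x ^ 2) ^ (1 / p) * |x| * |z| := one_mul _
  have inner_nonneg : ∀ g : ℝ, 0 ≤ g →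
      0 ≤ ∫ θ in (0:ℝ)..1, (1 - θ) * |x + θ * g| ^ (q - 2) := by
    intro g hg
    apply intervalIntegral.integral_nonneg (by norm_num)
    intro θ hθ
    exact mul_nonneg (by linarith [hθ.2]) (Real.rpow_nonneg (abs_nonneg _) _)
  have inner_bound : ∀ g : ℝ, 0 ≤ g →
      (∫ θ in (0:ℝ)..1, (1 - θ) * |x + θ * g| ^ (q - 2))
        ≤ 1 / 2 * (|x| + g) ^ (q - 2) := by
    intro g hg
    have hC : (0:ℝ) ≤ (|x| + g) ^ (q - 2) := Real.rpow_nonneg (by positivity) _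
    have hupper : (∫ θ in (0:ℝ)..1, (1 - θ) * (|x| + g) ^ (q - 2))
        = 1 / 2 * (|x| + g) ^ (q - 2) := by
      rw [intervalIntegral.integral_mul_const]
      have hh : (∫ θ in (0:ℝ)..1, (1 - θ)) = 1 / 2 := by
        rw [intervalIntegral.integral_sub intervalIntegrable_const
          intervalIntegral.intervalIntegrable_id]
        norm_num [integral_id]
      rw [hh]
    rw [← hupper, intervalIntegral.integral_of_le (by norm_num : (0:ℝ) ≤ 1),
      intervalIntegral.integral_of_le (by norm_num : (0:ℝ) ≤ 1)]
    apply integral_mono_of_nonneg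
    · filter_upwards [ae_restrict_mem measurableSet_Ioc] with θ hθ
      exact mul_nonneg (by linarith [hθ.2]) (Real.rpow_nonneg (abs_nonneg _) _)
    · exact ((continuous_const.sub continuous_id).mul continuous_const).integrableOn_Ioc
    · filter_upwards [ae_restrict_mem measurableSet_Ioc] with θ hθ
      apply mul_le_mul_of_nonneg_left _ (by linarith [hθ.2])
      apply Real.rpow_le_rpow (abs_nonneg _) _ (by linarith)
      calc |x + θ * g| ≤ |x| + |θ * g| := abs_add_le _ _
        _ = |x| + θ * g := by rw [abs_of_nonneg (mul_nonneg hθ.1.le hg)]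
        _ ≤ |x| + g := by
            have h5 : θ * g ≤ 1 * g := mul_le_mul_of_nonneg_right hθ.2 hg
            linarith
  have hbound : ∀ z : ℝ,
      |γdw γ' p t x z| ^ 2 *
          (∫ θ in (0:ℝ)..1, (1 - θ) * |x + θ * abs (γdw γ' p t x z)| ^ (q - 2))
        ≤ 2 ^ (q - 3) * ((1 + x ^ 2) * a) * (γ' ^ 2 * |z| ^ 2 + γ' ^ q * |z| ^ q) := by
    intro z
    set g := |γdw γ' p t x z| with hgdef
    set w := γ' * (1 + x ^ 2) ^ (1 / p) * |x| * |z| with hwdef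
    have hg0 : 0 ≤ g := abs_nonneg _
    have hw0 : 0 ≤ w := by rw [hwdef]; positivity
    have hgw : g ≤ w := hg_le z
    have s1 : g ^ 2 * (∫ θ in (0:ℝ)..1, (1 - θ) * |x + θ * g| ^ (q - 2))
        ≤ g ^ 2 * (1 / 2 * (|x| + g) ^ (q - 2)) :=
      mul_le_mul_of_nonneg_left (inner_bound g hg0) (sq_nonneg g)
    have s2 : g ^ 2 * (1 / 2 * (|x| + g) ^ (q - 2))
        ≤ w ^ 2 * (1 / 2 * (|x| + w) ^ (q - 2)) := by
      have hgsq : g ^ 2 ≤ w ^ 2 := pow_le_pow_left₀ hg0 hgw 2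
      have hpow : (|x| + g) ^ (q - 2) ≤ (|x| + w) ^ (q - 2) :=
        Real.rpow_le_rpow (by positivity) (by linarith) (by linarith)
      have h1 : (0:ℝ) ≤ (|x| + g) ^ (q - 2) := Real.rpow_nonneg (by positivity) _
      exact mul_le_mul hgsq (mul_le_mul_of_nonneg_left hpow (by norm_num))
        (mul_nonneg (by norm_num) h1) (sq_nonneg w)
    have s3 : (|x| + w) ^ (q - 2) ≤ 2 ^ (q - 2) * (e + w ^ (q - 2)) := by
      have hmax : |x| + w ≤ 2 * max |x| w := by
        rcases le_total |x| w with h | h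
        · rw [max_eq_right h]; linarith
        · rw [max_eq_left h]; linarith
      have hmax0 : (0:ℝ) ≤ max |x| w := le_trans habs (le_max_left _ _)
      calc (|x| + w) ^ (q - 2) ≤ (2 * max |x| w) ^ (q - 2) :=
            Real.rpow_le_rpow (by positivity) hmax (by linarith)
        _ = 2 ^ (q - 2) * (max |x| w) ^ (q - 2) :=
            Real.mul_rpow (by norm_num) hmax0
        _ ≤ 2 ^ (q - 2) * (e + w ^ (q - 2)) := by
            apply mul_le_mul_of_nonneg_left _ h2pow2.le
            rcases max_cases |x| w with ⟨h, _⟩ | ⟨h, _⟩ <;> rw [h]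
            · rw [he_def]
              linarith [Real.rpow_nonneg hw0 (q - 2)]
            · linarith [he0]
        _ = 2 ^ (q - 2) * (e + w ^ (q - 2)) := rfl
    have hw2e : w ^ 2 * e ≤ (1 + x ^ 2) * a * (γ' ^ 2 * |z| ^ 2) := by
      calc w ^ 2 * e
          = ((1 + x ^ 2) ^ (1 / p)) ^ 2 * (γ' ^ 2 * |z| ^ 2) * (e * |x| ^ 2) := by
            rw [hwdef]; ring
        _ = ((1 + x ^ 2) ^ (1 / p)) ^ 2 * (γ' ^ 2 * |z| ^ 2) * a := by
            rw [sq_abs x, e2]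
        _ ≤ (1 + x ^ 2) * (γ' ^ 2 * |z| ^ 2) * a := by
            apply mul_le_mul_of_nonneg_right
              (mul_le_mul_of_nonneg_right hPsq (by positivity)) ha0
        _ = (1 + x ^ 2) * a * (γ' ^ 2 * |z| ^ 2) := by ring
    have hwq : w ^ 2 * w ^ (q - 2) = w ^ q := by
      rw [← Real.rpow_natCast w 2,
        ← Real.rpow_add' hw0 (by push_cast; intro h; linarith : ((2:ℕ):ℝ) + (q - 2) ≠ 0),
        show ((2:ℕ):ℝ) + (q - 2) = q by push_cast; ring]
    have hwq_le : w ^ q ≤ (1 + x ^ 2) * a * (γ' ^ q * |z| ^ q) := by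
      have hexp : w ^ q
          = γ' ^ q * ((1 + x ^ 2) ^ (1 / p)) ^ q * |x| ^ q * |z| ^ q := by
        rw [hwdef, Real.mul_rpow (by positivity) (abs_nonneg z),
          Real.mul_rpow (by positivity) habs,
          Real.mul_rpow hγ.le (by positivity)]
      rw [hexp, ← ha_def]
      calc γ' ^ q * ((1 + x ^ 2) ^ (1 / p)) ^ q * a * |z| ^ q
          ≤ γ' ^ q * (1 + x ^ 2) * a * |z| ^ q := by
            apply mul_le_mul_of_nonneg_right _ (Real.rpow_nonneg (abs_nonneg z) q)
            exact mul_le_mul_of_nonneg_right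
              (mul_le_mul_of_nonneg_left hPq hγq) ha0
        _ = (1 + x ^ 2) * a * (γ' ^ q * |z| ^ q) := by ring
    have s4 : w ^ 2 * (1 / 2 * (|x| + w) ^ (q - 2))
        ≤ 2 ^ (q - 3) * (w ^ 2 * e + w ^ q) := by
      have h1 : w ^ 2 * (1 / 2 * (|x| + w) ^ (q - 2))
          ≤ w ^ 2 * (1 / 2 * (2 ^ (q - 2) * (e + w ^ (q - 2)))) := by
        apply mul_le_mul_of_nonneg_left _ (sq_nonneg w)
        apply mul_le_mul_of_nonneg_left s3 (by norm_num)
      have h2' : w ^ 2 * (1 / 2 * (2 ^ (q - 2) * (e + w ^ (q - 2))))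
          = 2 ^ (q - 3) * (w ^ 2 * e + w ^ 2 * w ^ (q - 2)) := by
        rw [h23]; ring
      rw [h2', hwq] at h1
      exact h1
    calc g ^ 2 * (∫ θ in (0:ℝ)..1, (1 - θ) * |x + θ * g| ^ (q - 2))
        ≤ w ^ 2 * (1 / 2 * (|x| + w) ^ (q - 2)) := le_trans s1 s2
      _ ≤ 2 ^ (q - 3) * (w ^ 2 * e + w ^ q) := s4
      _ ≤ 2 ^ (q - 3) * ((1 + x ^ 2) * a * (γ' ^ 2 * |z| ^ 2)
            + (1 + x ^ 2) * a * (γ' ^ q * |z| ^ q)) := by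
          apply mul_le_mul_of_nonneg_left _ h2pow3.le
          linarith [hw2e, hwq_le]
      _ = 2 ^ (q - 3) * ((1 + x ^ 2) * a) * (γ' ^ 2 * |z| ^ 2 + γ' ^ q * |z| ^ q) := by
          ring
  have Dint : Integrable (fun z : ℝ =>
      2 ^ (q - 3) * ((1 + x ^ 2) * a) * (γ' ^ 2 * |z| ^ 2 + γ' ^ q * |z| ^ q)) ρ := by
    have hD : (fun z : ℝ =>
        2 ^ (q - 3) * ((1 + x ^ 2) * a) * (γ' ^ 2 * |z| ^ 2 + γ' ^ q * |z| ^ q))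
        = fun z : ℝ => (2 ^ (q - 3) * ((1 + x ^ 2) * a) * γ' ^ 2) * |z| ^ 2
            + (2 ^ (q - 3) * ((1 + x ^ 2) * a) * γ' ^ q) * |z| ^ q := by
      funext z; ring
    rw [hD]
    exact (h2.const_mul _).add (hqi.const_mul _)
  have hint_le : (∫ z, |γdw γ' p t x z| ^ 2 *
        (∫ θ in (0:ℝ)..1, (1 - θ) * |x + θ * abs (γdw γ' p t x z)| ^ (q - 2)) ∂ρ)
      ≤ 2 ^ (q - 3) * ((1 + x ^ 2) * a) * M := by
    have step : (∫ z, |γdw γ' p t x z| ^ 2 *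
          (∫ θ in (0:ℝ)..1, (1 - θ) * |x + θ * abs (γdw γ' p t x z)| ^ (q - 2)) ∂ρ)
        ≤ ∫ z, 2 ^ (q - 3) * ((1 + x ^ 2) * a)
            * (γ' ^ 2 * |z| ^ 2 + γ' ^ q * |z| ^ q) ∂ρ := by
      apply integral_mono_of_nonneg _ Dint (Filter.Eventually.of_forall hbound)
      apply Filter.Eventually.of_forall
      intro z
      exact mul_nonneg (sq_nonneg _) (inner_nonneg _ (abs_nonneg _))
    have calcD : (∫ z, 2 ^ (q - 3) * ((1 + x ^ 2) * a)
          * (γ' ^ 2 * |z| ^ 2 + γ' ^ q * |z| ^ q) ∂ρ)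
        = 2 ^ (q - 3) * ((1 + x ^ 2) * a) * M := by
      have hD : (fun z : ℝ =>
          2 ^ (q - 3) * ((1 + x ^ 2) * a) * (γ' ^ 2 * |z| ^ 2 + γ' ^ q * |z| ^ q))
          = fun z : ℝ => (2 ^ (q - 3) * ((1 + x ^ 2) * a) * γ' ^ 2) * |z| ^ 2
              + (2 ^ (q - 3) * ((1 + x ^ 2) * a) * γ' ^ q) * |z| ^ q := by
        funext z; ring
      rw [hD, integral_add (h2.const_mul _) (hqi.const_mul _),
        integral_const_mul, integral_const_mul, ← hm2, ← hmq, hM]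
      ring
    rw [calcD] at step
    exact step
  have T3le : 2 * (q - 1) * (∫ z, |γdw γ' p t x z| ^ 2 *
        (∫ θ in (0:ℝ)..1, (1 - θ) * |x + θ * abs (γdw γ' p t x z)| ^ (q - 2)) ∂ρ)
      ≤ 2 * (q - 1) * (2 ^ (q - 3) * ((1 + x ^ 2) * a) * M) :=
    mul_le_mul_of_nonneg_left hint_le (by linarith)
  have hab : (1 + x ^ 2) * a = a + b := by
    linear_combination a2
  have key_b : 2 * (q - 1) * 2 ^ (q - 3) * M * b ≤ (2 * β' - (q - 1) * σ' ^ 2) * b := by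
    apply mul_le_mul_of_nonneg_right _ hb0
    calc 2 * (q - 1) * 2 ^ (q - 3) * M = (q - 1) * 2 ^ (q - 2) * M := by
          rw [h23]; ring
      _ ≤ (q - 1) * 2 ^ (q - 1) * M :=
          mul_le_mul_of_nonneg_right (mul_le_mul_of_nonneg_left h2pow_le hq1.le)
            hM_nonneg
      _ ≤ 2 * β' - (q - 1) * σ' ^ 2 := by linarith [hconstraint]
  have key_e : (q - 1) * σ' ^ 2 * e ≤ (q - 1) * σ' ^ 2 * (1 + a) :=
    mul_le_mul_of_nonneg_left e_le (mul_nonneg hq1.le (sq_nonneg _))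
  have hKM : 0 ≤ (q - 1) * 2 ^ (q - 2) * M :=
    mul_nonneg (mul_nonneg hq1.le h2pow2.le) hM_nonneg
  have key_a : 2 * (q - 1) * 2 ^ (q - 3) * M * a = (q - 1) * 2 ^ (q - 2) * M * a := by
    rw [h23]; ring
  have expand3 : 2 * (q - 1) * (2 ^ (q - 3) * ((1 + x ^ 2) * a) * M)
      = 2 * (q - 1) * 2 ^ (q - 3) * M * a + 2 * (q - 1) * 2 ^ (q - 3) * M * b := by
    rw [hab]; ring
  linarith [hμ, hσterm, T3le, key_b, key_e, key_a, expand3, hKM]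
end
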